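/- arXiv:2303.13646 — 4 statements merged into one kernel-verified Lean document; each statement's English description precedes it below -/
import Mathlib

section
/- Let S be a scheme and G a group S-scheme which is universally open and quasicompact over S. If G acts on an S-scheme X, then every point of X is contained in a G-invariant quasicompact open subscheme of X. -/
/-!
Choose an affine open `W ∋ x` and take `U = G · W = φ(pr₂⁻¹ W)`. The automorphism
`(a, x) ↦ (a⁻¹, a • x)` of `G ×_S X` exchanges `pr₂` and `φ`, so also `U = pr₂(φ⁻¹ W)`, which is
open since `pr₂` is a base change of the universally open `g`. As a base change of `g`, `pr₂` is
quasicompact, so `U` is the continuous image of the quasicompact `pr₂⁻¹ W`. Invariance is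
associativity of the action, read on points through the surjectivity of
`|Y ×_X Y'| → |Y| ×_{|X|} |Y'|`.
-/

open AlgebraicGeometry CategoryTheory CategoryTheory.Limits CategoryTheory.MorphismProperty

def SchemeHomUniversallyOpen {X S : AlgebraicGeometry.Scheme} (f : X ⟶ S) : Prop :=
  universally (topologically @IsOpenMap) f

theorem Set.image_preimage_subset_image_preimage_of_swap {Y X : Type*} {s t : Y → X}
    (σ : Y → Y) (hs : ∀ y, s (σ y) = t y) (ht : ∀ y, t (σ y) = s y) (W : Set X) :
    t '' (s ⁻¹' W) ⊆ s '' (t ⁻¹' W) := by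
  rintro _ ⟨y, hy, rfl⟩
  exact ⟨σ y, by simpa [ht] using hy, hs y⟩

theorem Set.image_preimage_eq_image_preimage_of_swap {Y X : Type*} {s t : Y → X}
    (σ : Y → Y) (hs : ∀ y, s (σ y) = t y) (ht : ∀ y, t (σ y) = s y) (W : Set X) :
    t '' (s ⁻¹' W) = s '' (t ⁻¹' W) :=
  (image_preimage_subset_image_preimage_of_swap σ hs ht W).antisymm
    (image_preimage_subset_image_preimage_of_swap σ ht hs W)

theorem Set.mem_image_preimage_of_forall_exists_comp {Y X : Type*} {s t : Y → X}
    (hcomp : ∀ p q, s p = t q → ∃ r, s r = s q ∧ t r = t p) {W : Set X} {p : Y}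
    (hp : s p ∈ t '' (s ⁻¹' W)) : t p ∈ t '' (s ⁻¹' W) := by
  obtain ⟨q, hqW, hqp⟩ := hp
  obtain ⟨r, hrq, hrp⟩ := hcomp p q hqp.symm
  exact ⟨r, by simpa [Set.mem_preimage, hrq] using hqW, hrp⟩

namespace AlgebraicGeometry.Scheme.GroupAction

def IsInvMulCancel {G S : Scheme} {g : G ⟶ S} {ι : G ⟶ G} (hι : ι ≫ g = g)
    (m : pullback g g ⟶ G) (e : S ⟶ G) : Prop :=
  ∀ {W : Scheme} (a : W ⟶ G), pullback.lift (a ≫ ι) a (by simp [hι]) ≫ m = a ≫ g ≫ e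

def IsOneSMul {G X S : Scheme} {g : G ⟶ S} {f : X ⟶ S} {e : S ⟶ G} (he : e ≫ g = 𝟙 S)
    (φ : pullback g f ⟶ X) : Prop :=
  pullback.lift (f ≫ e) (𝟙 X) (by simp [he]) ≫ φ = 𝟙 X

def IsMulSMul {G X S : Scheme} {g : G ⟶ S} {f : X ⟶ S} {m : pullback g g ⟶ G}
    (hm : m ≫ g = pullback.fst g g ≫ g) {φ : pullback g f ⟶ X}
    (hφ : φ ≫ f = pullback.snd g f ≫ f) : Prop :=
  ∀ {W : Scheme} (a b : W ⟶ G) (x : W ⟶ X) (hab : a ≫ g = b ≫ g) (hbx : b ≫ g = x ≫ f),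
    pullback.lift a (pullback.lift b x hbx ≫ φ)
      (by simpa [hφ, hab, pullback.lift_snd_assoc] using hbx) ≫ φ =
    pullback.lift (pullback.lift a b hab ≫ m) x
      (by simpa [hm, hab, pullback.lift_fst_assoc] using hbx) ≫ φ

variable {G X S : Scheme} {g : G ⟶ S} {f : X ⟶ S}
  {m : pullback g g ⟶ G} (hm : m ≫ g = pullback.fst g g ≫ g)
  {e : S ⟶ G} (he : e ≫ g = 𝟙 S) {ι : G ⟶ G} (hι : ι ≫ g = g)
  {φ : pullback g f ⟶ X} (hφ : φ ≫ f = pullback.snd g f ≫ f)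

theorem inv_smul_smul (hinv_mul : IsInvMulCancel hι m e)
    (hunit : IsOneSMul he φ)
    (hassoc : IsMulSMul hm hφ)
    {W : Scheme} (a : W ⟶ G) (x : W ⟶ X) (hax : a ≫ g = x ≫ f) :
    pullback.lift (a ≫ ι) (pullback.lift a x hax ≫ φ)
      (by simp only [Category.assoc, hι, hφ, pullback.lift_snd_assoc]; exact hax) ≫ φ = x := by
  rw [hassoc (a ≫ ι) a x (by simp [hι]) hax]
  have hunit_x : (pullback.lift (pullback.lift (a ≫ ι) a (by simp [hι]) ≫ m) x
      (by rw [Category.assoc, hm, pullback.lift_fst_assoc, Category.assoc, hι, hax]) :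
      W ⟶ pullback g f) = x ≫ pullback.lift (f ≫ e) (𝟙 X) (by simp [he]) := by
    apply pullback.hom_ext
    · rw [pullback.lift_fst, hinv_mul, Category.assoc, pullback.lift_fst, reassoc_of% hax]
    · rw [pullback.lift_snd, Category.assoc, pullback.lift_snd, Category.comp_id]
  rw [hunit_x, Category.assoc, hunit, Category.comp_id]

noncomputable def swap : pullback g f ⟶ pullback g f :=
  pullback.lift (pullback.fst g f ≫ ι) φ (by rw [Category.assoc, hι, hφ]; exact pullback.condition)

theorem swap_snd : swap hι hφ ≫ pullback.snd g f = φ :=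
  pullback.lift_snd _ _ _

theorem swap_act (hinv_mul : IsInvMulCancel hι m e)
    (hunit : IsOneSMul he φ)
    (hassoc : IsMulSMul hm hφ) :
    swap hι hφ ≫ φ = pullback.snd g f := by
  simpa [swap] using inv_smul_smul hm he hι hφ hinv_mul hunit hassoc _ _ pullback.condition

theorem image_act_preimage_snd_eq (hinv_mul : IsInvMulCancel hι m e)
    (hunit : IsOneSMul he φ)
    (hassoc : IsMulSMul hm hφ) (W : Set X) :
    φ.base '' ((pullback.snd g f).base ⁻¹' W) = (pullback.snd g f).base '' (φ.base ⁻¹' W) := by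
  have hswap := swap_act hm he hι hφ hinv_mul hunit hassoc
  refine Set.image_preimage_eq_image_preimage_of_swap (swap hι hφ).base
    (fun p => ?_) (fun p => ?_) W
  · rw [← Scheme.Hom.comp_apply, swap_snd]
  · rw [← Scheme.Hom.comp_apply, hswap]

theorem exists_snd_eq_and_act_eq (hassoc : IsMulSMul hm hφ)
    (p q : (pullback g f : Scheme)) (hpq : (pullback.snd g f).base p = φ.base q) :
    ∃ r, (pullback.snd g f).base r = (pullback.snd g f).base q ∧ φ.base r = φ.base p := by
  obtain ⟨z, rfl, rfl⟩ := Scheme.Pullback.exists_preimage_pullback p q hpq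
  set u := pullback.fst (pullback.snd g f) φ
  set v := pullback.snd (pullback.snd g f) φ
  -- `z = ((a, b • x), (b, x))`, and the witness is `(a * b, x)`.
  have hbx : (v ≫ pullback.fst g f) ≫ g = (v ≫ pullback.snd g f) ≫ f := by
    rw [Category.assoc, pullback.condition, Category.assoc]
  have hab : (u ≫ pullback.fst g f) ≫ g = (v ≫ pullback.fst g f) ≫ g := by
    rw [hbx, Category.assoc, pullback.condition, ← Category.assoc, pullback.condition,
      Category.assoc, hφ, Category.assoc]
  have hu : pullback.lift (u ≫ pullback.fst g f)
      (pullback.lift (v ≫ pullback.fst g f) (v ≫ pullback.snd g f) hbx ≫ φ)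
      (by simpa [hφ, hab, pullback.lift_snd_assoc] using hbx) = u := by
    apply pullback.hom_ext
    · rw [pullback.lift_fst]
    · have hv : pullback.lift (v ≫ pullback.fst g f) (v ≫ pullback.snd g f) hbx = v :=
        pullback.hom_ext (pullback.lift_fst _ _ _) (pullback.lift_snd _ _ _)
      rw [pullback.lift_snd, hv]
      exact pullback.condition.symm
  refine ⟨(pullback.lift (pullback.lift (u ≫ pullback.fst g f) (v ≫ pullback.fst g f) hab ≫ m)
      (v ≫ pullback.snd g f) (by simpa [hm, hab, pullback.lift_fst_assoc] using hbx)).base z,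
      ?_, ?_⟩
  · rw [← Scheme.Hom.comp_apply, pullback.lift_snd, Scheme.Hom.comp_apply]
  · rw [← Scheme.Hom.comp_apply, ← hassoc _ _ _ hab hbx, hu, Scheme.Hom.comp_apply]

end AlgebraicGeometry.Scheme.GroupAction

open Scheme.GroupAction in
/-- Let `S` be a scheme and `G` a group scheme over `S` (structure map `g`, multiplication `m`,
unit `e`, inversion `ι`) which is universally open and quasicompact over `S`.  If `G` acts on an
`S`-scheme `X` via `φ : G ×_S X ⟶ X`, then every point of `X` is contained in a `G`-invariant
quasicompact open subscheme of `X`. -/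
theorem point_in_invariant_quasicompact_open
    {G X S : AlgebraicGeometry.Scheme} (g : G ⟶ S) (f : X ⟶ S)
    (hg : SchemeHomUniversallyOpen g) [QuasiCompact g]
    -- group scheme structure on `G` over `S`
    (m : pullback g g ⟶ G) (hm : m ≫ g = pullback.fst g g ≫ g)
    (e : S ⟶ G) (he : e ≫ g = 𝟙 S)
    (ι : G ⟶ G) (hι : ι ≫ g = g)
    (hinv_mul : ∀ {W : AlgebraicGeometry.Scheme} (a : W ⟶ G),
      pullback.lift (a ≫ ι) a (by simp [hι]) ≫ m = a ≫ g ≫ e)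
    -- the action `φ`
    (φ : pullback g f ⟶ X) (hφ : φ ≫ f = pullback.snd g f ≫ f)
    (hunit : pullback.lift (f ≫ e) (𝟙 X) (by simp [he]) ≫ φ = 𝟙 X)
    (hassoc : ∀ {W : AlgebraicGeometry.Scheme} (a b : W ⟶ G) (x : W ⟶ X)
      (hab : a ≫ g = b ≫ g) (hbx : b ≫ g = x ≫ f),
      pullback.lift a (pullback.lift b x hbx ≫ φ) (by simpa [hφ, hab, pullback.lift_snd_assoc] using hbx) ≫ φ =
      pullback.lift (pullback.lift a b hab ≫ m) x (by simpa [hm, hab, pullback.lift_fst_assoc] using hbx) ≫ φ) :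
    ∀ x : X, ∃ U : X.Opens, x ∈ U ∧ IsCompact U.carrier ∧
      (∀ p : (pullback g f : AlgebraicGeometry.Scheme), (pullback.snd g f).base p ∈ U → φ.base p ∈ U) := by
  intro x
  obtain ⟨W, hW, hxW, -⟩ := exists_isAffineOpen_mem_and_subset (TopologicalSpace.Opens.mem_top x)
  have hsnd_open : IsOpenMap (pullback.snd g f).base :=
    hg _ _ _ (IsPullback.of_hasPullback g f).flip
  have hGW := image_act_preimage_snd_eq hm he hι hφ hinv_mul hunit hassoc W
  refine ⟨⟨φ.base '' ((pullback.snd g f).base ⁻¹' W), ?_⟩, ?_, ?_, fun p hp => ?_⟩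
  · rw [hGW]
    exact hsnd_open _ (W.isOpen.preimage φ.base.hom.continuous)
  · refine ⟨(pullback.lift (f ≫ e) (𝟙 X) (by simp [he])).base x, ?_, ?_⟩
    · rwa [Set.mem_preimage, ← Scheme.Hom.comp_apply, pullback.lift_snd]
    · rw [← Scheme.Hom.comp_apply, hunit]; rfl
  · exact ((pullback.snd g f).isCompact_preimage hW.isCompact).image φ.base.hom.continuous
  · exact Set.mem_image_preimage_of_forall_exists_comp
      (exists_snd_eq_and_act_eq hm hφ hassoc) hp
end

section
/- Let Γ be a nonzero additive subgroup of ℝ, M a finitely generated free abelian group with dual lattice N. Every face of a Γ-admissible cone in N_ℝ × ℝ_{≥0} is Γ-admissible. -/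
open scoped BigOperators

/-- The pairing between a lattice element `u ∈ M = ℤⁿ` and `w ∈ N_ℝ = ℝⁿ`. -/
noncomputable def latticePair {n : ℕ} (u : Fin n → ℤ) (w : Fin n → ℝ) : ℝ :=
  ∑ i, (u i : ℝ) * w i

/-- A subset of a real vector space contains no line. -/
def HasNoLine {E : Type*} [AddCommGroup E] [Module ℝ E] (s : Set E) : Prop :=
  ¬ ∃ (x v : E), v ≠ 0 ∧ ∀ t : ℝ, x + t • v ∈ s

/-- A cone `σ ⊆ N_ℝ × ℝ_{≥0}` is `Γ`-admissible if it is pointed (contains no line) and is cut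
out by finitely many inequalities `⟨u_i, w⟩ + γ_i t ≥ 0` with `u_i ∈ M` and `γ_i ∈ Γ`. -/
def IsGammaAdmissibleCone {n : ℕ} (Γ : AddSubgroup ℝ) (σ : Set ((Fin n → ℝ) × ℝ)) : Prop :=
  HasNoLine σ ∧ ∃ (m : ℕ) (u : Fin m → Fin n → ℤ) (γ : Fin m → ℝ),
    (∀ i, γ i ∈ Γ) ∧
    σ = {p : (Fin n → ℝ) × ℝ | 0 ≤ p.2 ∧ ∀ i, 0 ≤ latticePair (u i) p.1 + γ i * p.2}

/-- `latticePair u` as a linear map. -/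
noncomputable def latticeL {n : ℕ} (u : Fin n → ℤ) : (Fin n → ℝ) →ₗ[ℝ] ℝ where
  toFun := latticePair u
  map_add' x y := by
    simp only [latticePair, Pi.add_apply, mul_add, Finset.sum_add_distrib]
  map_smul' c x := by
    simp only [latticePair, Pi.smul_apply, smul_eq_mul, RingHom.id_apply, Finset.mul_sum]
    exact Finset.sum_congr rfl fun i _ => by ring

@[simp] lemma latticeL_apply {n : ℕ} (u : Fin n → ℤ) (w : Fin n → ℝ) :
    latticeL u w = latticePair u w := rfl

lemma latticePair_neg {n : ℕ} (u : Fin n → ℤ) (w : Fin n → ℝ) :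
    latticePair (-u) w = -latticePair u w := by
  simp [latticePair, Finset.sum_neg_distrib]

lemma latticePair_zero {n : ℕ} (w : Fin n → ℝ) :
    latticePair (0 : Fin n → ℤ) w = 0 := by
  simp [latticePair]

/-- The family of linear functionals cutting out the cone, including the `t ≥ 0` constraint
at index `none`. -/
noncomputable def coneMap {n m : ℕ} (u : Fin m → Fin n → ℤ) (γ : Fin m → ℝ) :
    Option (Fin m) → ((Fin n → ℝ) × ℝ) →ₗ[ℝ] ℝ
  | none => LinearMap.snd ℝ _ _
  | some i => (latticeL (u i)).comp (LinearMap.fst ℝ _ _) + (γ i) • LinearMap.snd ℝ _ _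

@[simp] lemma coneMap_none {n m : ℕ} (u : Fin m → Fin n → ℤ) (γ : Fin m → ℝ)
    (p : (Fin n → ℝ) × ℝ) : coneMap u γ none p = p.2 := rfl

@[simp] lemma coneMap_some {n m : ℕ} (u : Fin m → Fin n → ℤ) (γ : Fin m → ℝ) (i : Fin m)
    (p : (Fin n → ℝ) × ℝ) : coneMap u γ (some i) p = latticePair (u i) p.1 + γ i * p.2 := rfl

/-- Every face of a `Γ`-admissible cone is `Γ`-admissible, where a face of `σ` is the
intersection of `σ` with the kernel of a linear functional which is nonnegative on `σ`. -/
theorem face_of_gammaAdmissible_isGammaAdmissible {n : ℕ} (Γ : AddSubgroup ℝ) (hΓ : Γ ≠ ⊥)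
    (σ : Set ((Fin n → ℝ) × ℝ)) (hσ : IsGammaAdmissibleCone Γ σ)
    (ℓ : ((Fin n → ℝ) × ℝ) →ₗ[ℝ] ℝ) (hℓ : ∀ p ∈ σ, 0 ≤ ℓ p) :
    IsGammaAdmissibleCone Γ (σ ∩ {p | ℓ p = 0}) := by
  classical
  obtain ⟨hline, m, u, γ, hγ, hσeq⟩ := hσ
  -- a positive element of Γ
  obtain ⟨γ₀, hγ₀Γ, hγ₀pos⟩ : ∃ γ₀ ∈ Γ, 0 < γ₀ := by
    obtain ⟨x, hx, hx0⟩ : ∃ x ∈ Γ, x ≠ 0 := by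
      by_contra h
      push_neg at h
      exact hΓ (by ext y; simp only [AddSubgroup.mem_bot]; exact ⟨fun hy => h y hy, fun hy => hy ▸ Γ.zero_mem⟩)
    rcases lt_or_gt_of_ne hx0 with h | h
    · exact ⟨-x, Γ.neg_mem hx, by linarith⟩
    · exact ⟨x, hx, h⟩
  set g := coneMap u γ with hg
  have hmemσ : ∀ p, p ∈ σ ↔ ∀ j, 0 ≤ g j p := by
    intro p
    rw [hσeq]
    constructor
    · rintro ⟨h0, h⟩ (_ | i)
      · exact h0
      · exact h i
    · intro h
      exact ⟨h none, fun i => h (some i)⟩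
  set F := σ ∩ {p | ℓ p = 0} with hF
  have hFσ : ∀ p ∈ F, ∀ j, 0 ≤ g j p := fun p hp => (hmemσ p).mp hp.1
  have h0F : (0 : (Fin n → ℝ) × ℝ) ∈ F :=
    ⟨(hmemσ 0).mpr (fun j => by simp), by simp⟩
  have haddF : ∀ p ∈ F, ∀ q ∈ F, p + q ∈ F := by
    rintro p ⟨hpσ, hp0⟩ q ⟨hqσ, hq0⟩
    refine ⟨(hmemσ _).mpr fun j => ?_, ?_⟩
    · rw [map_add]
      exact add_nonneg ((hmemσ p).mp hpσ j) ((hmemσ q).mp hqσ j)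
    · simp only [Set.mem_setOf_eq] at hp0 hq0 ⊢
      rw [map_add, hp0, hq0, add_zero]
  set I : Set (Option (Fin m)) := {j | ∀ p ∈ F, g j p = 0} with hI
  -- key property: points of σ satisfying the equalities of I lie in the face
  have key : ∀ p, p ∈ σ → (∀ j ∈ I, g j p = 0) → ℓ p = 0 := by
    intro p hpσ hpI
    have hp : ∀ j, 0 ≤ g j p := (hmemσ p).mp hpσ
    have hw' : ∀ j : Option (Fin m), ∃ q, q ∈ F ∧ (j ∉ I → 0 < g j q) := by
      intro j
      by_cases hj : j ∈ I
      · exact ⟨0, h0F, fun h => absurd hj h⟩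
      · simp only [hI, Set.mem_setOf_eq] at hj
        push_neg at hj
        obtain ⟨q, hqF, hq0⟩ := hj
        exact ⟨q, hqF, fun _ => lt_of_le_of_ne (hFσ q hqF j) (Ne.symm hq0)⟩
    choose w hwF hwpos using hw'
    set q := ∑ j : Option (Fin m), w j with hq
    have hqF : q ∈ F := by
      rw [hq]
      exact Finset.sum_induction w (· ∈ F) (fun a b ha hb => haddF a ha b hb) h0F
        (fun j _ => hwF j)
    have hqI : ∀ j ∈ I, g j q = 0 := fun j hj => hj q hqF
    have hqpos : ∀ j ∉ I, 0 < g j q := by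
      intro j hj
      rw [hq, map_sum]
      exact Finset.sum_pos' (fun k _ => hFσ _ (hwF k) j)
        ⟨j, Finset.mem_univ j, hwpos j hj⟩
    set ε := Finset.univ.inf' Finset.univ_nonempty
      (fun j : Option (Fin m) => if j ∉ I ∧ 0 < g j p then g j q / g j p else 1) with hε
    have hεpos : 0 < ε := by
      rw [hε, Finset.lt_inf'_iff]
      intro j _
      split_ifs with h
      · exact div_pos (hqpos j h.1) h.2
      · exact one_pos
    have hεle : ∀ j, j ∉ I → 0 < g j p → ε * g j p ≤ g j q := by
      intro j hj hjp
      have h1 := Finset.inf'_le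
        (fun j : Option (Fin m) => if j ∉ I ∧ 0 < g j p then g j q / g j p else 1)
        (Finset.mem_univ j)
      rw [if_pos ⟨hj, hjp⟩] at h1
      calc ε * g j p ≤ (g j q / g j p) * g j p :=
            mul_le_mul_of_nonneg_right h1 (le_of_lt hjp)
        _ = g j q := div_mul_cancel₀ _ (ne_of_gt hjp)
    have hqεσ : q - ε • p ∈ σ := by
      rw [hmemσ]
      intro j
      have hlin : g j (q - ε • p) = g j q - ε * g j p := by
        rw [map_sub, map_smul, smul_eq_mul]
      rw [hlin]
      by_cases hj : j ∈ I
      · rw [hqI j hj, hpI j hj]; simp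
      · rcases lt_or_ge 0 (g j p) with hp' | hp'
        · linarith [hεle j hj hp']
        · have h1 : g j p = 0 := le_antisymm hp' (hp j)
          rw [h1]
          linarith [hqpos j hj]
    have h1 : 0 ≤ ℓ (q - ε • p) := hℓ _ hqεσ
    have hq0 : ℓ q = 0 := hqF.2
    have h2 : ℓ (q - ε • p) = -(ε * ℓ p) := by
      rw [map_sub, map_smul, hq0, smul_eq_mul]; ring
    have h3 := hℓ p hpσ
    nlinarith
  constructor
  · rintro ⟨x, v, hv, hl⟩
    exact hline ⟨x, v, hv, fun t => (hl t).1⟩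
  · refine ⟨m + (m + 1),
      Fin.addCases u (Fin.cases 0 (fun i => if some i ∈ I then -u i else 0)),
      Fin.addCases γ (Fin.cases (if (none : Option (Fin m)) ∈ I then -γ₀ else 0)
        (fun i => if some i ∈ I then -γ i else 0)), ?_, ?_⟩
    · intro j
      induction j using Fin.addCases with
      | left i => simp only [Fin.addCases_left]; exact hγ i
      | right i =>
        simp only [Fin.addCases_right]
        induction i using Fin.cases with
        | zero =>
          rw [Fin.cases_zero]
          split_ifs
          · exact Γ.neg_mem hγ₀Γ
          · exact Γ.zero_mem
        | succ i =>
          rw [Fin.cases_succ]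
          split_ifs
          · exact Γ.neg_mem (hγ i)
          · exact Γ.zero_mem
    · ext p
      simp only [Set.mem_setOf_eq]
      constructor
      · rintro ⟨hpσ, hp0⟩
        have hp : ∀ j, 0 ≤ g j p := (hmemσ p).mp hpσ
        have hpF : p ∈ F := ⟨hpσ, hp0⟩
        refine ⟨hp none, fun j => ?_⟩
        induction j using Fin.addCases with
        | left i =>
          simp only [Fin.addCases_left]
          exact hp (some i)
        | right i =>
          simp only [Fin.addCases_right]
          induction i using Fin.cases with
          | zero =>
            rw [Fin.cases_zero, Fin.cases_zero, latticePair_zero]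
            split_ifs with h
            · have hp2 : p.2 = 0 := h p hpF
              rw [hp2]; norm_num
            · norm_num
          | succ i =>
            rw [Fin.cases_succ, Fin.cases_succ]
            split_ifs with h
            · have h0 : g (some i) p = 0 := h p hpF
              simp only [hg, coneMap_some] at h0
              rw [latticePair_neg]
              linarith
            · rw [latticePair_zero]; norm_num
      · rintro ⟨ht, hall⟩
        have hpσ : p ∈ σ := by
          rw [hσeq]
          refine ⟨ht, fun i => ?_⟩
          have := hall (Fin.castAdd (m + 1) i)
          rwa [Fin.addCases_left, Fin.addCases_left] at this
        have hp : ∀ j, 0 ≤ g j p := (hmemσ p).mp hpσ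
        have hIeq : ∀ j ∈ I, g j p = 0 := by
          intro j hj
          match j with
          | none =>
            have := hall (Fin.natAdd m (0 : Fin (m + 1)))
            rw [Fin.addCases_right, Fin.addCases_right, Fin.cases_zero, Fin.cases_zero,
              latticePair_zero, if_pos hj] at this
            have h2 : p.2 ≤ 0 := by nlinarith
            have h3 := hp none
            simp only [hg, coneMap_none] at h3 ⊢
            linarith
          | some i =>
            have := hall (Fin.natAdd m (Fin.succ i))
            rw [Fin.addCases_right, Fin.addCases_right, Fin.cases_succ, Fin.cases_succ,
              if_pos hj, if_pos hj, latticePair_neg] at this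
            have h1 := hp (some i)
            simp only [hg, coneMap_some] at h1 ⊢
            linarith
        exact ⟨hpσ, key p hpσ hIeq⟩
end

section
/- Let Γ ≤ ℝ be a nonzero subgroup and let σ be a cone in N_ℝ × ℝ_{≥0} that meets N_ℝ × {1}. Then σ is Γ-admissible if and only if π(σ ∩ (N_ℝ × {1})) is a pointed Γ-rational polyhedron in N_ℝ, where π is projection to N_ℝ. -/
open scoped BigOperators

/-- A polyhedron `P ⊆ N_ℝ` is `Γ`-rational if it is cut out by finitely many inequalities
`⟨u_i, w⟩ ≥ γ_i` with `u_i ∈ M` and `γ_i ∈ Γ`. -/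
def IsGammaRationalPolyhedron {n : ℕ} (Γ : AddSubgroup ℝ) (P : Set (Fin n → ℝ)) : Prop :=
  ∃ (m : ℕ) (u : Fin m → Fin n → ℤ) (γ : Fin m → ℝ),
    (∀ i, γ i ∈ Γ) ∧ P = {w | ∀ i, γ i ≤ latticePair (u i) w}

/-- A (closed convex) cone contained in the upper half-space `N_ℝ × ℝ_{≥0}`. -/
def IsConeInUpperHalfSpace {n : ℕ} (σ : Set ((Fin n → ℝ) × ℝ)) : Prop :=
  IsClosed σ ∧ Convex ℝ σ ∧ (∀ p ∈ σ, ∀ t : ℝ, 0 ≤ t → t • p ∈ σ) ∧ ∀ p ∈ σ, 0 ≤ p.2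

lemma latticePair_add {n : ℕ} (u : Fin n → ℤ) (w v : Fin n → ℝ) :
    latticePair u (w + v) = latticePair u w + latticePair u v := by
  simp [latticePair, mul_add, Finset.sum_add_distrib]

lemma latticePair_smul {n : ℕ} (u : Fin n → ℤ) (c : ℝ) (w : Fin n → ℝ) :
    latticePair u (c • w) = c * latticePair u w := by
  simp [latticePair, Finset.mul_sum, mul_left_comm]

/-- A cone `σ` in `N_ℝ × ℝ_{≥0}` meeting `N_ℝ × {1}` is `Γ`-admissible if and only if
`π(σ ∩ (N_ℝ × {1}))` is a pointed `Γ`-rational polyhedron in `N_ℝ`. -/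
theorem gammaAdmissible_iff_slice_pointed_gammaRational {n : ℕ} (Γ : AddSubgroup ℝ) (hΓ : Γ ≠ ⊥)
    (σ : Set ((Fin n → ℝ) × ℝ)) (hσ : IsConeInUpperHalfSpace σ)
    (hmeet : ∃ w : Fin n → ℝ, (w, (1 : ℝ)) ∈ σ) :
    IsGammaAdmissibleCone Γ σ ↔
      (IsGammaRationalPolyhedron Γ {w : Fin n → ℝ | (w, (1 : ℝ)) ∈ σ} ∧
        HasNoLine {w : Fin n → ℝ | (w, (1 : ℝ)) ∈ σ}) := by
  obtain ⟨x₀, hx₀⟩ := hmeet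
  obtain ⟨hclosed, hconv, hcone, hupper⟩ := hσ
  have hadd : ∀ p ∈ σ, ∀ q ∈ σ, p + q ∈ σ := by
    intro p hp q hq
    have h1 : ((1:ℝ)/2) • p + ((1:ℝ)/2) • q ∈ σ :=
      hconv hp hq (by norm_num) (by norm_num) (by norm_num)
    have h2 := hcone _ h1 2 (by norm_num)
    rw [smul_add, smul_smul, smul_smul] at h2
    norm_num at h2
    exact h2
  constructor
  · rintro ⟨hnl, m, u, γ, hγ, hσeq⟩
    constructor
    · refine ⟨m, u, fun i => -γ i, fun i => neg_mem (hγ i), ?_⟩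
      ext w
      simp only [Set.mem_setOf_eq, hσeq]
      constructor
      · intro h i
        have := h.2 i
        linarith
      · intro h
        exact ⟨zero_le_one, fun i => by have := h i; linarith⟩
    · rintro ⟨x, v, hv, hline⟩
      refine hnl ⟨(x, 1), (v, 0), ?_, fun t => ?_⟩
      · intro h
        exact hv (congrArg Prod.fst h)
      · have := hline t
        simpa [Prod.smul_mk, Prod.mk_add_mk] using this
  · rintro ⟨⟨m, u, γ, hγ, hPeq⟩, hnlP⟩
    have hP : ∀ w : Fin n → ℝ, (w, (1:ℝ)) ∈ σ ↔ ∀ i, γ i ≤ latticePair (u i) w := by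
      intro w
      constructor
      · intro h
        have : w ∈ {w : Fin n → ℝ | (w, (1:ℝ)) ∈ σ} := h
        rw [hPeq] at this
        exact this
      · intro h
        have : w ∈ {w | ∀ i, γ i ≤ latticePair (u i) w} := h
        rw [← hPeq] at this
        exact this
    have hx₀P : ∀ i, γ i ≤ latticePair (u i) x₀ := (hP x₀).mp hx₀
    -- slice at positive t
    have hslice : ∀ (w : Fin n → ℝ) (t : ℝ), 0 < t →
        ((w, t) ∈ σ ↔ ∀ i, γ i * t ≤ latticePair (u i) w) := by
      intro w t ht
      have hmem : (w, t) ∈ σ ↔ (t⁻¹ • w, (1:ℝ)) ∈ σ := by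
        constructor
        · intro h
          have := hcone _ h t⁻¹ (by positivity)
          simpa [Prod.smul_mk, inv_mul_cancel₀ ht.ne'] using this
        · intro h
          have := hcone _ h t ht.le
          simpa [Prod.smul_mk, smul_smul, mul_inv_cancel₀ ht.ne'] using this
      rw [hmem, hP]
      constructor
      · intro h i
        have := h i
        rw [latticePair_smul] at this
        rw [mul_comm]
        calc t * γ i ≤ t * (t⁻¹ * latticePair (u i) w) := by
              exact mul_le_mul_of_nonneg_left this ht.le
          _ = latticePair (u i) w := by field_simp
      · intro h i
        have h' := h i
        rw [mul_comm] at h'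
        rw [latticePair_smul, le_inv_mul_iff₀ ht]
        exact h'
    -- slice at t = 0 : recession cone
    have hzero : ∀ w : Fin n → ℝ, ((w, (0:ℝ)) ∈ σ ↔ ∀ i, 0 ≤ latticePair (u i) w) := by
      intro w
      constructor
      · intro h i
        have key : ∀ s : ℝ, 0 ≤ s →
            γ i ≤ latticePair (u i) x₀ + s * latticePair (u i) w := by
          intro s hs
          have hsw : (s • w, (0:ℝ)) ∈ σ := by
            have := hcone _ h s hs
            simpa [Prod.smul_mk] using this
          have hsum := hadd _ hx₀ _ hsw
          have hsum' : (x₀ + s • w, (1:ℝ)) ∈ σ := by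
            simpa [Prod.mk_add_mk] using hsum
          have := (hP _).mp hsum' i
          rwa [latticePair_add, latticePair_smul] at this
        by_contra hb
        push_neg at hb
        set a := latticePair (u i) x₀
        set b := latticePair (u i) w
        have ha : γ i ≤ a := by simpa using key 0 le_rfl
        have hs0 : 0 ≤ (a - γ i + 1) / (-b) := by
          apply div_nonneg (by linarith) (by linarith)
        have hk := key _ hs0
        have hnb : -b ≠ 0 := neg_ne_zero.mpr hb.ne
        have hcalc : (a - γ i + 1) / (-b) * b = -(a - γ i + 1) := by
          rw [div_neg, neg_mul, div_mul_cancel₀ _ hb.ne]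
        rw [hcalc] at hk
        linarith
      · intro h
        have hmemk : ∀ k : ℕ, ((((k:ℝ)+1)⁻¹) • x₀ + w, ((k:ℝ)+1)⁻¹) ∈ σ := by
          intro k
          have hc : (0:ℝ) < (k:ℝ) + 1 := by positivity
          have h1 : (x₀ + ((k:ℝ)+1) • w, (1:ℝ)) ∈ σ := by
            rw [hP]
            intro i
            rw [latticePair_add, latticePair_smul]
            have := hx₀P i
            nlinarith [h i]
          have h2 := hcone _ h1 (((k:ℝ)+1)⁻¹) (by positivity)
          have : (((k:ℝ)+1)⁻¹ • (x₀ + ((k:ℝ)+1) • w), ((k:ℝ)+1)⁻¹ * 1) ∈ σ := by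
            simpa [Prod.smul_mk] using h2
          simpa [smul_add, smul_smul, inv_mul_cancel₀ hc.ne', mul_one] using this
        have htend : Filter.Tendsto
            (fun k : ℕ => (((((k:ℝ)+1)⁻¹) • x₀ + w, ((k:ℝ)+1)⁻¹) : (Fin n → ℝ) × ℝ))
            Filter.atTop (nhds (w, (0:ℝ))) := by
          have hinv : Filter.Tendsto (fun k : ℕ => ((k:ℝ)+1)⁻¹) Filter.atTop (nhds 0) := by
            simpa only [one_div] using tendsto_one_div_add_atTop_nhds_zero_nat (𝕜 := ℝ)
          have h1 : Filter.Tendsto (fun k : ℕ => (((k:ℝ)+1)⁻¹) • x₀ + w)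
              Filter.atTop (nhds w) := by
            have := (hinv.smul_const x₀).add (tendsto_const_nhds (x := w))
            simpa using this
          exact h1.prodMk_nhds hinv
        exact hclosed.mem_of_tendsto htend (Filter.Eventually.of_forall hmemk)
    constructor
    · -- HasNoLine σ
      rintro ⟨⟨x, s⟩, ⟨v, r⟩, hvr, hline⟩
      have hr : r = 0 := by
        by_contra hr
        have h2 : (0:ℝ) ≤ s + (-(s+1)/r) * r := by
          have := hupper _ (hline (-(s+1)/r))
          simpa [Prod.smul_mk, Prod.mk_add_mk, smul_eq_mul] using this
        rw [div_mul_cancel₀ _ hr] at h2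
        linarith
      subst hr
      have hv : v ≠ 0 := by
        intro hv0
        apply hvr
        rw [hv0]
        rfl
      have hlin : ∀ t : ℝ, (x + t • v, s) ∈ σ := by
        intro t
        have := hline t
        simpa [Prod.smul_mk, Prod.mk_add_mk] using this
      have hs : 0 ≤ s := by
        have := hupper _ (hlin 0)
        simpa using this
      rcases hs.lt_or_eq with hs | hs
      · apply hnlP
        refine ⟨s⁻¹ • x, s⁻¹ • v, smul_ne_zero (inv_ne_zero hs.ne') hv, fun t => ?_⟩
        have := hcone _ (hlin t) s⁻¹ (by positivity)
        have h3 : (s⁻¹ • (x + t • v), (1:ℝ)) ∈ σ := by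
          simpa [Prod.smul_mk, smul_eq_mul, inv_mul_cancel₀ hs.ne'] using this
        have heq : s⁻¹ • x + t • (s⁻¹ • v) = s⁻¹ • (x + t • v) := by
          rw [smul_add, smul_smul, smul_smul, mul_comm]
        show (s⁻¹ • x + t • (s⁻¹ • v), (1:ℝ)) ∈ σ
        rw [heq]
        exact h3
      · apply hnlP
        refine ⟨x₀ + x, v, hv, fun t => ?_⟩
        have h0 : (x + t • v, (0:ℝ)) ∈ σ := by rw [hs]; exact hlin t
        have := hadd _ hx₀ _ h0
        show (x₀ + x + t • v, (1:ℝ)) ∈ σ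
        simpa [Prod.mk_add_mk, add_assoc] using this
    · -- σ is cut out by the inequalities
      refine ⟨m, u, fun i => -γ i, fun i => neg_mem (hγ i), ?_⟩
      ext ⟨w, t⟩
      simp only [Set.mem_setOf_eq]
      constructor
      · intro hp
        have ht : 0 ≤ t := hupper _ hp
        refine ⟨ht, fun i => ?_⟩
        rcases ht.lt_or_eq with h | h
        · have := (hslice w t h).mp hp i
          nlinarith
        · have hp0 : (w, (0:ℝ)) ∈ σ := by rw [h]; exact hp
          have := (hzero w).mp hp0 i
          rw [← h]
          simpa using this
      · rintro ⟨ht, hi⟩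
        rcases ht.lt_or_eq with h | h
        · refine (hslice w t h).mpr (fun i => ?_)
          have := hi i
          nlinarith
        · rw [← h]
          exact (hzero w).mpr (fun i => by have := hi i; rw [← h] at this; linarith)
end

section
/- Let P be a pointed Γ-rational polyhedron in N_ℝ, and let c(P) be the closure of {(tw, t) | t ∈ ℝ_{≥0}, w ∈ P} in N_ℝ × ℝ_{≥0}. Then c(P) is a Γ-admissible cone. -/
open scoped BigOperators

/-- The closed cone `c(P)` over `P`: the closure of `{(t • w, t) | t ≥ 0, w ∈ P}`. -/
def coneOver {n : ℕ} (P : Set (Fin n → ℝ)) : Set ((Fin n → ℝ) × ℝ) :=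
  closure {q : (Fin n → ℝ) × ℝ | ∃ t : ℝ, 0 ≤ t ∧ ∃ w ∈ P, q = (t • w, t)}

lemma lp_add {n : ℕ} (u : Fin n → ℤ) (a b : Fin n → ℝ) :
    latticePair u (a + b) = latticePair u a + latticePair u b := by
  simp [latticePair, mul_add, Finset.sum_add_distrib]

lemma lp_smul {n : ℕ} (u : Fin n → ℤ) (t : ℝ) (w : Fin n → ℝ) :
    latticePair u (t • w) = t * latticePair u w := by
  simp [latticePair, Finset.mul_sum, mul_left_comm]

lemma lp_cont {n : ℕ} (u : Fin n → ℤ) : Continuous (latticePair u) := by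
  unfold latticePair
  exact continuous_finset_sum _ fun i _ => continuous_const.mul (continuous_apply i)

lemma affine_nonneg_coeff_zero (a b : ℝ) (h : ∀ t : ℝ, 0 ≤ a + t * b) : b = 0 := by
  by_contra hb
  have := h ((-a - 1) / b)
  rw [div_mul_cancel₀ _ hb] at this
  linarith

/-- If `P` is a (nonempty) pointed `Γ`-rational polyhedron in `N_ℝ`, then the closed cone
`c(P)` over `P` is a `Γ`-admissible cone. -/
theorem coneOver_isGammaAdmissible {n : ℕ} (Γ : AddSubgroup ℝ) (hΓ : Γ ≠ ⊥)
    (P : Set (Fin n → ℝ)) (hne : P.Nonempty)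
    (hrat : IsGammaRationalPolyhedron Γ P) (hpointed : HasNoLine P) :
    IsGammaAdmissibleCone Γ (coneOver P) := by
  obtain ⟨m, u, γ, hγ, hP⟩ := hrat
  obtain ⟨w0, hw0⟩ := hne
  set S : Set ((Fin n → ℝ) × ℝ) :=
    {p : (Fin n → ℝ) × ℝ | 0 ≤ p.2 ∧ ∀ i, 0 ≤ latticePair (u i) p.1 + (-γ i) * p.2} with hS
  have hmem : ∀ w, w ∈ P ↔ ∀ i, γ i ≤ latticePair (u i) w := by
    intro w; rw [hP]; rfl
  -- S is closed
  have hSclosed : IsClosed S := by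
    have : S = {p : (Fin n → ℝ) × ℝ | 0 ≤ p.2} ∩
        ⋂ i, {p : (Fin n → ℝ) × ℝ | 0 ≤ latticePair (u i) p.1 + (-γ i) * p.2} := by
      ext p; simp [hS, Set.mem_iInter]
    rw [this]
    refine (isClosed_le continuous_const continuous_snd).inter (isClosed_iInter fun i => ?_)
    exact isClosed_le continuous_const
      (((lp_cont (u i)).comp continuous_fst).add (continuous_const.mul continuous_snd))
  -- the generating set
  set G : Set ((Fin n → ℝ) × ℝ) :=
    {q : (Fin n → ℝ) × ℝ | ∃ t : ℝ, 0 ≤ t ∧ ∃ w ∈ P, q = (t • w, t)} with hG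
  have hGS : G ⊆ S := by
    rintro q ⟨t, ht, w, hw, rfl⟩
    refine ⟨ht, fun i => ?_⟩
    have := (hmem w).mp hw i
    simp only [lp_smul]
    nlinarith
  have hkey : coneOver P = S := by
    apply Set.Subset.antisymm
    · exact closure_minimal hGS hSclosed
    · rintro ⟨w, t⟩ ⟨ht, hineq⟩
      rcases lt_or_eq_of_le ht with htpos | hteq
      · apply subset_closure
        refine ⟨t, le_of_lt htpos, t⁻¹ • w, ?_, ?_⟩
        · rw [hmem]
          intro i
          have := hineq i
          rw [lp_smul]
          rw [← sub_nonneg]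
          have h1 : t⁻¹ * latticePair (u i) w - γ i
              = t⁻¹ * (latticePair (u i) w + (-γ i) * t) := by
            field_simp; ring
          rw [h1]
          positivity
        · rw [smul_smul, mul_inv_cancel₀ (ne_of_gt htpos), one_smul]
      · -- t = 0, so w is in the recession cone
        have hrec : ∀ i, 0 ≤ latticePair (u i) w := by
          intro i; have := hineq i; rw [← hteq] at this; simpa using this
        -- approximate by (s • w0 + w, s) for s → 0⁺
        show (w, t) ∈ closure G
        refine mem_closure_of_tendsto
          (f := fun k : ℕ => (((1:ℝ)/(k+1)) • w0 + w, (1:ℝ)/(k+1))) (b := Filter.atTop) ?_ ?_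
        · have h0 : Filter.Tendsto (fun k : ℕ => (1:ℝ)/(k+1)) Filter.atTop (nhds 0) :=
            tendsto_one_div_add_atTop_nhds_zero_nat
          have h1 : Filter.Tendsto (fun k : ℕ => ((1:ℝ)/(k+1)) • w0 + w) Filter.atTop
              (nhds w) := by
            have := (h0.smul_const w0).add_const w
            simpa using this
          have ht0 : t = 0 := hteq.symm
          rw [ht0]
          exact h1.prodMk_nhds h0
        · filter_upwards with k
          refine ⟨(1:ℝ)/(k+1), by positivity, w0 + ((k:ℝ)+1) • w, ?_, ?_⟩
          · rw [hmem]
            intro i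
            rw [lp_add, lp_smul]
            have := (hmem w0).mp hw0 i
            have := hrec i
            nlinarith [Nat.cast_nonneg (α := ℝ) k]
          · have : ((1:ℝ)/(k+1)) • (w0 + ((k:ℝ)+1) • w)
                = ((1:ℝ)/(k+1)) • w0 + w := by
              rw [smul_add, smul_smul]
              congr 1
              rw [div_mul_cancel₀, one_smul]
              positivity
            rw [this]
  constructor
  · -- HasNoLine
    rintro ⟨x, v, hv, hline⟩
    rw [hkey] at hline
    have hmemS : ∀ t : ℝ, (x + t • v) ∈ S := hline
    have hv2 : v.2 = 0 := by
      apply affine_nonneg_coeff_zero x.2 v.2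
      intro t
      exact (hmemS t).1
    have hv1 : ∀ i, latticePair (u i) v.1 = 0 := by
      intro i
      apply affine_nonneg_coeff_zero (latticePair (u i) x.1 + (-γ i) * x.2)
      intro t
      have := (hmemS t).2 i
      simp only [Prod.fst_add, Prod.snd_add, Prod.smul_fst, Prod.smul_snd, smul_eq_mul,
        hv2, mul_zero, add_zero, lp_add, lp_smul] at this
      linarith
    have hv1ne : v.1 ≠ 0 := by
      intro h
      exact hv (Prod.ext h hv2)
    exact hpointed ⟨w0, v.1, hv1ne, fun t => by
      rw [hmem]
      intro i
      rw [lp_add, lp_smul, hv1 i, mul_zero, add_zero]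
      exact (hmem w0).mp hw0 i⟩
  · refine ⟨m, u, fun i => -γ i, fun i => neg_mem (hγ i), ?_⟩
    rw [hkey]
end
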